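/- Let p > −1. For all x > 0, the function R_p(x) = ∫₀^∞ t^p e^{−t²/2} e^{−xt} dt has the convergent power series representation R_p(x) = ∑_{k=0}^∞ ((−1)^k 2^{(k+p−1)/2} / k!) Γ((k+p+1)/2) x^k. -/

import Mathlib

open Real MeasureTheory Set

/-- The Mills ratio of order `p`: `R_p(x) = ∫₀^∞ t^p e^{-t²/2} e^{-xt} dt`. -/
noncomputable def millsR (p x : ℝ) : ℝ :=
  ∫ t in Set.Ioi (0 : ℝ), t ^ p * Real.exp (-t ^ 2 / 2) * Real.exp (-x * t)

/-!
Expand `e^{-xt}` in its Taylor series and integrate term by term. The interchange is justified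
by dominated convergence: the series of absolute values sums to `t^p e^{-t²/2} e^{xt}`, which is
integrable because the Gaussian factor beats any exponential. The `k`-th term is then a Gaussian
moment, `∫₀^∞ t^{k+p} e^{-t²/2} dt = 2^{(k+p-1)/2} Γ((k+p+1)/2)`.
-/

open Nat in
theorem hasSum_integral_mul_pow_div_factorial {α : Type*} [MeasurableSpace α] {μ : Measure α}
    {f g : α → ℝ} (hf : AEStronglyMeasurable f μ) (hg : AEStronglyMeasurable g μ)
    (hfg : Integrable (fun a => |f a| * exp |g a|) μ) :
    HasSum (fun k : ℕ => ∫ a, f a * (g a ^ k / k !) ∂μ) (∫ a, f a * exp (g a) ∂μ) := by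
  have hexp (y : ℝ) : HasSum (fun k : ℕ => y ^ k / k !) (exp y) := by
    rw [exp_eq_exp_ℝ]
    exact NormedSpace.expSeries_div_hasSum_exp y
  refine hasSum_integral_of_dominated_convergence (fun k a => |f a| * (|g a| ^ k / k !))
    (fun k => by fun_prop) (fun k => ae_of_all _ fun a => ?_)
    (ae_of_all _ fun a => ((hexp |g a|).mul_left |f a|).summable) ?_
    (ae_of_all _ fun a => (hexp (g a)).mul_left (f a))
  · simp
  · simpa only [((hexp _).mul_left _).tsum_eq] using hfg

theorem integral_rpow_mul_exp_neg_sq_div_two {q : ℝ} (hq : -1 < q) :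
    ∫ t in Ioi (0 : ℝ), t ^ q * exp (-t ^ 2 / 2) = 2 ^ ((q - 1) / 2) * Gamma ((q + 1) / 2) := by
  have h := integral_rpow_mul_exp_neg_mul_rpow two_pos hq (one_half_pos (α := ℝ))
  have harg (t : ℝ) : -(1 / 2) * t ^ (2 : ℝ) = -t ^ 2 / 2 := by rw [rpow_two]; ring
  simp only [harg] at h
  rw [h, one_div, inv_rpow zero_le_two, ← rpow_neg zero_le_two, neg_div, neg_neg,
    ← div_eq_mul_inv, ← rpow_sub_one two_ne_zero]
  ring_nf

theorem integrableOn_rpow_mul_exp_neg_sq_div_two_mul_exp {p : ℝ} (hp : -1 < p) (y : ℝ) :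
    IntegrableOn (fun t => t ^ p * exp (-t ^ 2 / 2) * exp (y * t)) (Ioi 0) := by
  have hdom := (integrableOn_rpow_mul_exp_neg_mul_sq (b := 1 / 4) (by norm_num) hp).const_mul
    (exp (y ^ 2))
  refine hdom.mono' (by fun_prop) ?_
  filter_upwards [ae_restrict_mem measurableSet_Ioi] with t (ht : 0 < t)
  -- `y t ≤ y² + t²/4` absorbs the exponential factor into the Gaussian
  have hexp : exp (-t ^ 2 / 2) * exp (y * t) ≤ exp (y ^ 2) * exp (-(1 / 4) * t ^ 2) := by
    rw [← exp_add, ← exp_add]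
    exact exp_le_exp.mpr (by nlinarith [sq_nonneg (y - t / 2)])
  have htp : 0 ≤ t ^ p := rpow_nonneg ht.le p
  rw [norm_of_nonneg (by positivity), mul_assoc, mul_left_comm (exp (y ^ 2))]
  exact mul_le_mul_of_nonneg_left hexp htp

open Nat in
theorem setIntegral_rpow_mul_exp_neg_sq_div_two_mul_pow_div_factorial {p : ℝ} (hp : -1 < p)
    (y : ℝ) (k : ℕ) :
    ∫ t in Ioi (0 : ℝ), t ^ p * exp (-t ^ 2 / 2) * ((y * t) ^ k / k !) =
      y ^ k / k ! * (2 ^ (((k : ℝ) + p - 1) / 2) * Gamma (((k : ℝ) + p + 1) / 2)) := by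
  have hkp : -1 < (k : ℝ) + p := by linarith [k.cast_nonneg (α := ℝ)]
  rw [← integral_rpow_mul_exp_neg_sq_div_two hkp, ← integral_const_mul]
  refine setIntegral_congr_fun measurableSet_Ioi fun t (ht : 0 < t) => ?_
  rw [rpow_add ht, rpow_natCast, mul_pow]
  ring

theorem stmt19 (p : ℝ) (hp : -1 < p) (x : ℝ) (hx : 0 < x) :
    HasSum
      (fun k : ℕ =>
        (-1 : ℝ) ^ k * (2 : ℝ) ^ (((k : ℝ) + p - 1) / 2) / (Nat.factorial k) *
          Real.Gamma (((k : ℝ) + p + 1) / 2) * x ^ k)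
      (millsR p x) := by
  have hdom : IntegrableOn (fun t => |t ^ p * exp (-t ^ 2 / 2)| * exp |-x * t|) (Ioi 0) := by
    refine (integrableOn_rpow_mul_exp_neg_sq_div_two_mul_exp hp x).congr_fun
      (fun t (ht : 0 < t) => ?_) measurableSet_Ioi
    rw [abs_of_nonneg (by positivity), neg_mul, abs_neg, abs_of_pos (by positivity)]
  have hseries := hasSum_integral_mul_pow_div_factorial (f := fun t => t ^ p * exp (-t ^ 2 / 2))
    (g := fun t => -x * t) (by fun_prop) (by fun_prop) hdom
  rw [millsR]
  convert hseries using 2 with k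
  rw [setIntegral_rpow_mul_exp_neg_sq_div_two_mul_pow_div_factorial hp, neg_pow]
  ring
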